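/- Let r ≥ 2, n ≥ 1 be integers, I ∈ {0,1}, and let A_{n,g}, B_{n,g} be the Padé approximation polynomials to (1−z)^{1/r}. Then for every nonzero complex number z, A_{n,0}(z)·B_{n+I,1}(z) ≠ A_{n+I,1}(z)·B_{n,0}(z). Equivalently, A_{n,0}(z)B_{n+I,1}(z) − A_{n+I,1}(z)B_{n,0}(z) = c·z^{2n+I} for the nonzero constant c = binomial(n−1/r, n)·binomial(n+I+1/r−1, n+I−1) − binomial(n+I−1/r, n+I)·binomial(n+1/r, n). -/

import Mathlib

noncomputable def gbinom (x : ℝ) (k : ℕ) : ℝ :=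
  (∏ i ∈ Finset.range k, (x - i)) / (Nat.factorial k)

/-- The Padé approximation polynomial `A_{n,g}` to `(1-z)^{1/r}`. -/
noncomputable def padeA (r : ℝ) (n g : ℕ) (z : ℂ) : ℂ :=
  ∑ m ∈ Finset.range (n + 1),
    (gbinom ((n : ℝ) - g + 1 / r) m : ℂ) * (Nat.choose (2 * n - g - m) (n - g) : ℂ) * (-z) ^ m

/-- The Padé approximation polynomial `B_{n,g}` to `(1-z)^{1/r}`. -/
noncomputable def padeB (r : ℝ) (n g : ℕ) (z : ℂ) : ℂ :=
  ∑ m ∈ Finset.range (n - g + 1),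
    (gbinom ((n : ℝ) - 1 / r) m : ℂ) * (Nat.choose (2 * n - g - m) n : ℂ) * (-z) ^ m

section helpers

lemma gbinom_zero (y : ℝ) : gbinom y 0 = 1 := by simp [gbinom]

lemma gbinom_succ (y : ℝ) (k : ℕ) : gbinom y (k+1) * (k+1) = gbinom y k * (y - k) := by
  have hk : (Nat.factorial k : ℝ) ≠ 0 := by positivity
  have hk1 : ((k:ℝ) + 1) ≠ 0 := by positivity
  simp only [gbinom, Finset.prod_range_succ, Nat.factorial_succ]
  push_cast
  field_simp

lemma gbinom_shift (y : ℝ) (k : ℕ) : gbinom y k * (y - k) = gbinom (y-1) k * y := by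
  simp only [gbinom]
  rw [div_mul_eq_mul_div, div_mul_eq_mul_div]
  congr 1
  rw [← Finset.prod_range_succ (fun i => (y - i)), Finset.prod_range_succ']
  simp only [Nat.cast_zero, sub_zero]
  congr 1
  apply Finset.prod_congr rfl
  intro i _
  push_cast
  ring

lemma gb_rel1 (y : ℝ) (k : ℕ) : y * gbinom (y-1) k = ((k:ℝ)+1) * gbinom y (k+1) := by
  have h1 := gbinom_succ y k
  have h2 := gbinom_shift y k
  nlinarith [h1, h2]

lemma gbinom_pos (y : ℝ) (k : ℕ) (h : ∀ i, i < k → 0 < y - i) : 0 < gbinom y k := by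
  apply div_pos
  · exact Finset.prod_pos (fun i hi => h i (Finset.mem_range.mp hi))
  · positivity

lemma sum_step (N : ℕ) (z : ℂ) (f g h : ℕ → ℂ)
    (h0 : f 0 = g 0)
    (hm : ∀ m, m < N → f (m+1) = g (m+1) + h m) :
    ∑ m ∈ Finset.range (N+1), f m * (-z)^m
      = ∑ m ∈ Finset.range (N+1), g m * (-z)^m
        + (-z) * ∑ m ∈ Finset.range N, h m * (-z)^m := by
  rw [Finset.sum_range_succ' (fun m => f m * (-z)^m),
      Finset.sum_range_succ' (fun m => g m * (-z)^m), Finset.mul_sum]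
  have key : ∀ i ∈ Finset.range N,
      f (i+1) * (-z)^(i+1) = g (i+1) * (-z)^(i+1) + (-z) * (h i * (-z)^i) := by
    intro i hi
    rw [hm i (Finset.mem_range.mp hi)]
    ring
  rw [Finset.sum_congr rfl key, Finset.sum_add_distrib]
  rw [h0]
  ring

lemma natC0 (n : ℕ) : (n+1) * Nat.choose (2*n+1) n = (2*n+1) * Nat.choose (2*n) n := by
  have h := Nat.add_one_mul_choose_eq (2*n) n
  have hsym : Nat.choose (2*n+1) (n+1) = Nat.choose (2*n+1) n := by
    rw [← Nat.choose_symm (by omega : n+1 ≤ 2*n+1)]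
    congr 1
    omega
  rw [hsym] at h
  rw [h]
  exact Nat.mul_comm _ _

lemma natC0' (n : ℕ) : (n+1) * Nat.choose (2*n+1) (n+1) = (2*n+1) * Nat.choose (2*n) n := by
  have h := Nat.add_one_mul_choose_eq (2*n) n
  rw [h]
  exact Nat.mul_comm _ _

lemma natC0'' (n : ℕ) : (n+1) * Nat.choose (2*n+2) (n+1) = (2*n+2) * Nat.choose (2*n+1) n := by
  have h := Nat.add_one_mul_choose_eq (2*n+1) n
  rw [show 2*n+1+1 = 2*n+2 by omega] at h
  rw [h]
  exact Nat.mul_comm _ _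

lemma natC0''' (n : ℕ) : (n+1) * Nat.choose (2*n+2) (n+1) = (2*n+2) * Nat.choose (2*n+1) (n+1) := by
  have h := natC0'' n
  have hsym : Nat.choose (2*n+1) (n+1) = Nat.choose (2*n+1) n := by
    rw [← Nat.choose_symm (by omega : n+1 ≤ 2*n+1)]
    congr 1
    omega
  rw [hsym, h]

lemma natA1r (b m a j : ℕ) (hj : m + j = b + 1) (ha : a = b + j) :
    ((b:ℝ)+2) * (Nat.choose (a+1) (b+1)) =
      (2*(b:ℝ)+3) * (Nat.choose a (b+1)) + ((m:ℝ)+1) * (Nat.choose a b) := by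
  have pascal := Nat.choose_succ_succ a b
  have hsr := Nat.choose_succ_right_eq a b
  rw [show a - b = j by omega] at hsr
  have hjr : (m:ℝ) + j = (b:ℝ) + 1 := by exact_mod_cast congrArg (Nat.cast : ℕ → ℝ) hj
  have pr : ((Nat.choose (a+1) (b+1) : ℕ) : ℝ) = (Nat.choose a b : ℝ) + (Nat.choose a (b+1) : ℝ) := by
    exact_mod_cast congrArg (Nat.cast : ℕ → ℝ) pascal
  have hsrr : ((Nat.choose a (b+1) : ℕ) : ℝ) * ((b:ℝ)+1) = (Nat.choose a b : ℝ) * (j:ℝ) := by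
    exact_mod_cast congrArg (Nat.cast : ℕ → ℝ) hsr
  linear_combination ((b:ℝ)+2) * pr - hsrr - (Nat.choose a b : ℝ) * hjr

lemma natB2r (n m a j : ℕ) (hj : m + j = n) (ha : a = n + j) :
    ((n:ℝ)+1) * (Nat.choose (a+1) (n+1)) =
      (2*(n:ℝ)+2) * (Nat.choose a (n+1)) + ((m:ℝ)+1) * (Nat.choose a n) := by
  have pascal := Nat.choose_succ_succ a n
  have hsr := Nat.choose_succ_right_eq a n
  rw [show a - n = j by omega] at hsr
  have hjr : (m:ℝ) + j = (n:ℝ) := by exact_mod_cast congrArg (Nat.cast : ℕ → ℝ) hj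
  have pr : ((Nat.choose (a+1) (n+1) : ℕ) : ℝ) = (Nat.choose a n : ℝ) + (Nat.choose a (n+1) : ℝ) := by
    exact_mod_cast congrArg (Nat.cast : ℕ → ℝ) pascal
  have hsrr : ((Nat.choose a (n+1) : ℕ) : ℝ) * ((n:ℝ)+1) = (Nat.choose a n : ℝ) * (j:ℝ) := by
    exact_mod_cast congrArg (Nat.cast : ℕ → ℝ) hsr
  linear_combination ((n:ℝ)+1) * pr - hsrr - (Nat.choose a n : ℝ) * hjr

lemma natSuccr (q n : ℕ) :
    ((n:ℝ)+1) * (Nat.choose (q+1) (n+1)) = ((q:ℝ)+1) * (Nat.choose q n) := by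
  have h := Nat.add_one_mul_choose_eq q n
  have := congrArg (Nat.cast : ℕ → ℝ) h
  push_cast at this
  linarith

end helpers

section expansions
variable (r : ℝ) (b : ℕ) (z : ℂ)

lemma expA21 :
    padeA r (b+2) 1 z = ∑ m ∈ Finset.range (b+3),
      (((gbinom ((b:ℝ)+1+1/r) m * Nat.choose (2*b+3-m) (b+1) : ℝ)) : ℂ) * (-z)^m := by
  rw [padeA]
  apply Finset.sum_congr rfl
  intro m hm
  rw [show ((b+2:ℕ) : ℝ) - ((1:ℕ):ℝ) + 1/r = (b:ℝ)+1+1/r by push_cast; ring,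
      show 2*(b+2) - 1 - m = 2*b+3-m by omega, show (b+2) - 1 = b+1 by omega]
  push_cast
  ring

lemma expA10 :
    padeA r (b+1) 0 z = ∑ m ∈ Finset.range (b+2),
      (((gbinom ((b:ℝ)+1+1/r) m * Nat.choose (2*b+2-m) (b+1) : ℝ)) : ℂ) * (-z)^m := by
  rw [padeA]
  apply Finset.sum_congr rfl
  intro m hm
  rw [show ((b+1:ℕ) : ℝ) - ((0:ℕ):ℝ) + 1/r = (b:ℝ)+1+1/r by push_cast; ring,
      show 2*(b+1) - 0 - m = 2*b+2-m by omega, show (b+1) - 0 = b+1 by omega]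
  push_cast
  ring

lemma expA10' :
    padeA r (b+1) 0 z = ∑ m ∈ Finset.range (b+3),
      (((gbinom ((b:ℝ)+1+1/r) m * Nat.choose (2*b+2-m) (b+1) : ℝ)) : ℂ) * (-z)^m := by
  rw [expA10, Finset.sum_range_succ (n := b+2)]
  rw [show 2*b+2-(b+2) = b by omega, Nat.choose_eq_zero_of_lt (by omega : b < b+1)]
  push_cast
  ring

lemma expA11 :
    padeA r (b+1) 1 z = ∑ m ∈ Finset.range (b+2),
      (((gbinom ((b:ℝ)+1/r) m * Nat.choose (2*b+1-m) b : ℝ)) : ℂ) * (-z)^m := by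
  rw [padeA]
  apply Finset.sum_congr rfl
  intro m hm
  rw [show ((b+1:ℕ) : ℝ) - ((1:ℕ):ℝ) + 1/r = (b:ℝ)+1/r by push_cast; ring,
      show 2*(b+1) - 1 - m = 2*b+1-m by omega, show (b+1) - 1 = b by omega]
  push_cast
  ring

lemma expB21 :
    padeB r (b+2) 1 z = ∑ m ∈ Finset.range (b+2),
      (((gbinom ((b:ℝ)+2-1/r) m * Nat.choose (2*b+3-m) (b+2) : ℝ)) : ℂ) * (-z)^m := by
  rw [padeB]
  rw [show (b+2) - 1 + 1 = b+2 by omega]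
  apply Finset.sum_congr rfl
  intro m hm
  rw [show ((b+2:ℕ) : ℝ) - 1/r = (b:ℝ)+2-1/r by push_cast; ring,
      show 2*(b+2) - 1 - m = 2*b+3-m by omega]
  push_cast
  ring

lemma expB21' :
    padeB r (b+2) 1 z = ∑ m ∈ Finset.range (b+3),
      (((gbinom ((b:ℝ)+2-1/r) m * Nat.choose (2*b+3-m) (b+2) : ℝ)) : ℂ) * (-z)^m := by
  rw [expB21, Finset.sum_range_succ (n := b+2)]
  rw [show 2*b+3-(b+2) = b+1 by omega, Nat.choose_eq_zero_of_lt (by omega : b+1 < b+2)]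
  push_cast
  ring

lemma expB10 :
    padeB r (b+1) 0 z = ∑ m ∈ Finset.range (b+2),
      (((gbinom ((b:ℝ)+1-1/r) m * Nat.choose (2*b+2-m) (b+1) : ℝ)) : ℂ) * (-z)^m := by
  rw [padeB]
  rw [show (b+1) - 0 + 1 = b+2 by omega]
  apply Finset.sum_congr rfl
  intro m hm
  rw [show ((b+1:ℕ) : ℝ) - 1/r = (b:ℝ)+1-1/r by push_cast; ring,
      show 2*(b+1) - 0 - m = 2*b+2-m by omega]
  push_cast
  ring

lemma expB11 :
    padeB r (b+1) 1 z = ∑ m ∈ Finset.range (b+1),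
      (((gbinom ((b:ℝ)+1-1/r) m * Nat.choose (2*b+1-m) (b+1) : ℝ)) : ℂ) * (-z)^m := by
  rw [padeB]
  rw [show (b+1) - 1 + 1 = b+1 by omega]
  apply Finset.sum_congr rfl
  intro m hm
  rw [show ((b+1:ℕ) : ℝ) - 1/r = (b:ℝ)+1-1/r by push_cast; ring,
      show 2*(b+1) - 1 - m = 2*b+1-m by omega]
  push_cast
  ring

lemma expA20 :
    padeA r (b+2) 0 z = ∑ m ∈ Finset.range (b+3),
      (((gbinom ((b:ℝ)+2+1/r) m * Nat.choose (2*b+4-m) (b+2) : ℝ)) : ℂ) * (-z)^m := by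
  rw [padeA]
  apply Finset.sum_congr rfl
  intro m hm
  rw [show ((b+2:ℕ) : ℝ) - ((0:ℕ):ℝ) + 1/r = (b:ℝ)+2+1/r by push_cast; ring,
      show 2*(b+2) - 0 - m = 2*b+4-m by omega, show (b+2) - 0 = b+2 by omega]
  push_cast
  ring

lemma expB20 :
    padeB r (b+2) 0 z = ∑ m ∈ Finset.range (b+3),
      (((gbinom ((b:ℝ)+2-1/r) m * Nat.choose (2*b+4-m) (b+2) : ℝ)) : ℂ) * (-z)^m := by
  rw [padeB]
  rw [show (b+2) - 0 + 1 = b+3 by omega]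
  apply Finset.sum_congr rfl
  intro m hm
  rw [show ((b+2:ℕ) : ℝ) - 1/r = (b:ℝ)+2-1/r by push_cast; ring,
      show 2*(b+2) - 0 - m = 2*b+4-m by omega]
  push_cast
  ring

end expansions

lemma recA1 (r : ℝ) (b : ℕ) (z : ℂ) :
    ((b:ℂ)+2) * padeA r (b+2) 1 z
      = (2*(b:ℂ)+3) * padeA r (b+1) 0 z
        + (((b:ℝ)+1+1/r : ℝ) : ℂ) * ((-z) * padeA r (b+1) 1 z) := by
  have h0c : ((((b:ℝ)+2) * (gbinom ((b:ℝ)+1+1/r) 0 * Nat.choose (2*b+3-0) (b+1)) : ℝ) : ℂ)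
      = (((2*(b:ℝ)+3) * (gbinom ((b:ℝ)+1+1/r) 0 * Nat.choose (2*b+2-0) (b+1)) : ℝ) : ℂ) := by
    have h := natC0 (b+1)
    rw [show 2*(b+1)+1 = 2*b+3 by omega, show 2*(b+1) = 2*b+2 by omega] at h
    have hr := congrArg (Nat.cast : ℕ → ℝ) h
    push_cast at hr
    simp only [Nat.sub_zero, gbinom_zero, one_mul]
    exact_mod_cast hr
  have hmc : ∀ m, m < b+2 →
      ((((b:ℝ)+2) * (gbinom ((b:ℝ)+1+1/r) (m+1) * Nat.choose (2*b+3-(m+1)) (b+1)) : ℝ) : ℂ)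
      = (((2*(b:ℝ)+3) * (gbinom ((b:ℝ)+1+1/r) (m+1) * Nat.choose (2*b+2-(m+1)) (b+1)) : ℝ) : ℂ)
        + ((((b:ℝ)+1+1/r) * (gbinom ((b:ℝ)+1/r) m * Nat.choose (2*b+1-m) b) : ℝ) : ℂ) := by
    intro m hm
    obtain ⟨j, hj⟩ : ∃ j, m + j = b + 1 := ⟨b+1-m, by omega⟩
    rw [show 2*b+3-(m+1) = (b+j)+1 by omega, show 2*b+2-(m+1) = b+j by omega,
        show 2*b+1-m = b+j by omega]
    have hg : ((b:ℝ)+1+1/r) * gbinom ((b:ℝ)+1/r) m = ((m:ℝ)+1) * gbinom ((b:ℝ)+1+1/r) (m+1) := by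
      have h := gb_rel1 ((b:ℝ)+1+1/r) m
      rw [show (b:ℝ)+1+1/r-1 = (b:ℝ)+1/r by ring] at h
      exact h
    have hA1 := natA1r b m (b+j) j hj rfl
    have realeq : ((b:ℝ)+2) * (gbinom ((b:ℝ)+1+1/r) (m+1) * (Nat.choose ((b+j)+1) (b+1) : ℝ))
        = (2*(b:ℝ)+3) * (gbinom ((b:ℝ)+1+1/r) (m+1) * (Nat.choose (b+j) (b+1) : ℝ))
          + ((b:ℝ)+1+1/r) * (gbinom ((b:ℝ)+1/r) m * (Nat.choose (b+j) b : ℝ)) := by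
      linear_combination gbinom ((b:ℝ)+1+1/r) (m+1) * hA1 - (Nat.choose (b+j) b : ℝ) * hg
    exact_mod_cast realeq
  have S := sum_step (b+2) z
    (fun m => ((((b:ℝ)+2) * (gbinom ((b:ℝ)+1+1/r) m * Nat.choose (2*b+3-m) (b+1)) : ℝ) : ℂ))
    (fun m => (((2*(b:ℝ)+3) * (gbinom ((b:ℝ)+1+1/r) m * Nat.choose (2*b+2-m) (b+1)) : ℝ) : ℂ))
    (fun m => ((((b:ℝ)+1+1/r) * (gbinom ((b:ℝ)+1/r) m * Nat.choose (2*b+1-m) b) : ℝ) : ℂ))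
    h0c hmc
  rw [expA21 r b z, expA10' r b z, expA11 r b z]
  calc ((b:ℂ)+2) * ∑ m ∈ Finset.range (b+3),
        (((gbinom ((b:ℝ)+1+1/r) m * Nat.choose (2*b+3-m) (b+1) : ℝ)) : ℂ) * (-z)^m
      = ∑ m ∈ Finset.range (b+3),
        ((((b:ℝ)+2) * (gbinom ((b:ℝ)+1+1/r) m * Nat.choose (2*b+3-m) (b+1)) : ℝ) : ℂ) * (-z)^m := by
        rw [Finset.mul_sum]
        exact Finset.sum_congr rfl (fun m _ => by push_cast; ring)
    _ = _ := S
    _ = (2*(b:ℂ)+3) * ∑ m ∈ Finset.range (b+3),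
          (((gbinom ((b:ℝ)+1+1/r) m * Nat.choose (2*b+2-m) (b+1) : ℝ)) : ℂ) * (-z)^m
        + (((b:ℝ)+1+1/r : ℝ) : ℂ) * ((-z) * ∑ m ∈ Finset.range (b+2),
          (((gbinom ((b:ℝ)+1/r) m * Nat.choose (2*b+1-m) b : ℝ)) : ℂ) * (-z)^m) := by
        rw [Finset.mul_sum, Finset.mul_sum, Finset.mul_sum, Finset.mul_sum]
        congr 1
        · exact Finset.sum_congr rfl (fun m _ => by push_cast; ring)
        · exact Finset.sum_congr rfl (fun m _ => by push_cast; ring)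

lemma recB1 (r : ℝ) (hx0 : 0 < 1/r) (hx1 : 1/r < 1) (b : ℕ) (z : ℂ) :
    ((b:ℂ)+2) * padeB r (b+2) 1 z
      = (2*(b:ℂ)+3) * padeB r (b+1) 0 z
        + (((b:ℝ)+1+1/r : ℝ) : ℂ) * ((-z) * padeB r (b+1) 1 z) := by
  have h0c : ((((b:ℝ)+2) * (gbinom ((b:ℝ)+2-1/r) 0 * Nat.choose (2*b+3-0) (b+2)) : ℝ) : ℂ)
      = (((2*(b:ℝ)+3) * (gbinom ((b:ℝ)+1-1/r) 0 * Nat.choose (2*b+2-0) (b+1)) : ℝ) : ℂ) := by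
    have h := natC0' (b+1)
    rw [show 2*(b+1)+1 = 2*b+3 by omega, show 2*(b+1) = 2*b+2 by omega,
        show (b+1)+1 = b+2 by omega] at h
    have hr := congrArg (Nat.cast : ℕ → ℝ) h
    push_cast at hr
    simp only [Nat.sub_zero, gbinom_zero, one_mul]
    exact_mod_cast hr
  have hmc : ∀ m, m < b+1 →
      ((((b:ℝ)+2) * (gbinom ((b:ℝ)+2-1/r) (m+1) * Nat.choose (2*b+3-(m+1)) (b+2)) : ℝ) : ℂ)
      = (((2*(b:ℝ)+3) * (gbinom ((b:ℝ)+1-1/r) (m+1) * Nat.choose (2*b+2-(m+1)) (b+1)) : ℝ) : ℂ)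
        + ((((b:ℝ)+1+1/r) * (gbinom ((b:ℝ)+1-1/r) m * Nat.choose (2*b+1-m) (b+1)) : ℝ) : ℂ) := by
    intro m hm
    obtain ⟨j, hj⟩ : ∃ j, m + j = b := ⟨b-m, by omega⟩
    rw [show 2*b+3-(m+1) = (b+j+1)+1 by omega, show 2*b+2-(m+1) = b+j+1 by omega,
        show 2*b+1-m = b+j+1 by omega]
    have hjr : (m:ℝ) + j = (b:ℝ) := by exact_mod_cast congrArg (Nat.cast : ℕ → ℝ) hj
    have hd : ((b:ℝ)+1-1/r-m) ≠ 0 := by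
      have hmb : (m:ℝ) ≤ (b:ℝ) := by exact_mod_cast Nat.le_of_lt_succ hm
      nlinarith
    have hA := gbinom_shift ((b:ℝ)+2-1/r) (m+1)
    rw [show ((b:ℝ)+2-1/r) - ((m+1:ℕ):ℝ) = (b:ℝ)+1-1/r-m by push_cast; ring,
        show ((b:ℝ)+2-1/r) - 1 = (b:ℝ)+1-1/r by ring] at hA
    have hB := gbinom_succ ((b:ℝ)+1-1/r) m
    rw [show ((b:ℝ)+1-1/r) - (m:ℝ) = (b:ℝ)+1-1/r-m by ring] at hB
    have hC := natSuccr (b+j+1) (b+1)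
    rw [show (b+1)+1 = b+2 by omega] at hC
    push_cast at hC
    have realeq : ((b:ℝ)+2) * (gbinom ((b:ℝ)+2-1/r) (m+1) * (Nat.choose ((b+j+1)+1) (b+2) : ℝ))
        = (2*(b:ℝ)+3) * (gbinom ((b:ℝ)+1-1/r) (m+1) * (Nat.choose (b+j+1) (b+1) : ℝ))
          + ((b:ℝ)+1+1/r) * (gbinom ((b:ℝ)+1-1/r) m * (Nat.choose (b+j+1) (b+1) : ℝ)) := by
      have key : (((b:ℝ)+2) * (gbinom ((b:ℝ)+2-1/r) (m+1) * (Nat.choose ((b+j+1)+1) (b+2) : ℝ))) * ((b:ℝ)+1-1/r-m)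
          = ((2*(b:ℝ)+3) * (gbinom ((b:ℝ)+1-1/r) (m+1) * (Nat.choose (b+j+1) (b+1) : ℝ))
          + ((b:ℝ)+1+1/r) * (gbinom ((b:ℝ)+1-1/r) m * (Nat.choose (b+j+1) (b+1) : ℝ))) * ((b:ℝ)+1-1/r-m) := by
        linear_combination ((b:ℝ)+2) * (Nat.choose ((b+j+1)+1) (b+2) : ℝ) * hA
          + ((b:ℝ)+2-1/r) * gbinom ((b:ℝ)+1-1/r) (m+1) * hC
          + ((b:ℝ)+1+1/r) * (Nat.choose (b+j+1) (b+1) : ℝ) * hB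
          + ((b:ℝ)+2-1/r) * gbinom ((b:ℝ)+1-1/r) (m+1) * (Nat.choose (b+j+1) (b+1) : ℝ) * hjr
      exact mul_right_cancel₀ hd key
    exact_mod_cast realeq
  have S := sum_step (b+1) z
    (fun m => ((((b:ℝ)+2) * (gbinom ((b:ℝ)+2-1/r) m * Nat.choose (2*b+3-m) (b+2)) : ℝ) : ℂ))
    (fun m => (((2*(b:ℝ)+3) * (gbinom ((b:ℝ)+1-1/r) m * Nat.choose (2*b+2-m) (b+1)) : ℝ) : ℂ))
    (fun m => ((((b:ℝ)+1+1/r) * (gbinom ((b:ℝ)+1-1/r) m * Nat.choose (2*b+1-m) (b+1)) : ℝ) : ℂ))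
    h0c hmc
  rw [expB21 r b z, expB10 r b z, expB11 r b z]
  calc ((b:ℂ)+2) * ∑ m ∈ Finset.range (b+2),
        (((gbinom ((b:ℝ)+2-1/r) m * Nat.choose (2*b+3-m) (b+2) : ℝ)) : ℂ) * (-z)^m
      = ∑ m ∈ Finset.range (b+2),
        ((((b:ℝ)+2) * (gbinom ((b:ℝ)+2-1/r) m * Nat.choose (2*b+3-m) (b+2)) : ℝ) : ℂ) * (-z)^m := by
        rw [Finset.mul_sum]
        exact Finset.sum_congr rfl (fun m _ => by push_cast; ring)
    _ = _ := S
    _ = (2*(b:ℂ)+3) * ∑ m ∈ Finset.range (b+2),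
          (((gbinom ((b:ℝ)+1-1/r) m * Nat.choose (2*b+2-m) (b+1) : ℝ)) : ℂ) * (-z)^m
        + (((b:ℝ)+1+1/r : ℝ) : ℂ) * ((-z) * ∑ m ∈ Finset.range (b+1),
          (((gbinom ((b:ℝ)+1-1/r) m * Nat.choose (2*b+1-m) (b+1) : ℝ)) : ℂ) * (-z)^m) := by
        rw [Finset.mul_sum, Finset.mul_sum, Finset.mul_sum, Finset.mul_sum]
        congr 1
        · exact Finset.sum_congr rfl (fun m _ => by push_cast; ring)
        · exact Finset.sum_congr rfl (fun m _ => by push_cast; ring)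

lemma recA2 (r : ℝ) (hx0 : 0 < 1/r) (b : ℕ) (z : ℂ) :
    ((b:ℂ)+2) * padeA r (b+2) 0 z
      = (2*(b:ℂ)+4) * padeA r (b+2) 1 z
        + (((b:ℝ)+2-1/r : ℝ) : ℂ) * ((-z) * padeA r (b+1) 0 z) := by
  have h0c : ((((b:ℝ)+2) * (gbinom ((b:ℝ)+2+1/r) 0 * Nat.choose (2*b+4-0) (b+2)) : ℝ) : ℂ)
      = (((2*(b:ℝ)+4) * (gbinom ((b:ℝ)+1+1/r) 0 * Nat.choose (2*b+3-0) (b+1)) : ℝ) : ℂ) := by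
    have h := natC0'' (b+1)
    rw [show 2*(b+1)+2 = 2*b+4 by omega, show 2*(b+1)+1 = 2*b+3 by omega,
        show (b+1)+1 = b+2 by omega] at h
    have hr := congrArg (Nat.cast : ℕ → ℝ) h
    push_cast at hr
    simp only [Nat.sub_zero, gbinom_zero, one_mul]
    exact_mod_cast hr
  have hmc : ∀ m, m < b+2 →
      ((((b:ℝ)+2) * (gbinom ((b:ℝ)+2+1/r) (m+1) * Nat.choose (2*b+4-(m+1)) (b+2)) : ℝ) : ℂ)
      = (((2*(b:ℝ)+4) * (gbinom ((b:ℝ)+1+1/r) (m+1) * Nat.choose (2*b+3-(m+1)) (b+1)) : ℝ) : ℂ)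
        + ((((b:ℝ)+2-1/r) * (gbinom ((b:ℝ)+1+1/r) m * Nat.choose (2*b+2-m) (b+1)) : ℝ) : ℂ) := by
    intro m hm
    obtain ⟨j, hj⟩ : ∃ j, m + j = b + 1 := ⟨b+1-m, by omega⟩
    rw [show 2*b+4-(m+1) = (b+j+1)+1 by omega, show 2*b+3-(m+1) = b+j+1 by omega,
        show 2*b+2-m = b+j+1 by omega]
    have hjr : (m:ℝ) + j = (b:ℝ) + 1 := by exact_mod_cast congrArg (Nat.cast : ℕ → ℝ) hj
    have hd : ((b:ℝ)+1+1/r-m) ≠ 0 := by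
      have hmb : (m:ℝ) ≤ (b:ℝ) + 1 := by exact_mod_cast Nat.le_of_lt_succ hm
      nlinarith
    have hA := gbinom_shift ((b:ℝ)+2+1/r) (m+1)
    rw [show ((b:ℝ)+2+1/r) - ((m+1:ℕ):ℝ) = (b:ℝ)+1+1/r-m by push_cast; ring,
        show ((b:ℝ)+2+1/r) - 1 = (b:ℝ)+1+1/r by ring] at hA
    have hB := gbinom_succ ((b:ℝ)+1+1/r) m
    rw [show ((b:ℝ)+1+1/r) - (m:ℝ) = (b:ℝ)+1+1/r-m by ring] at hB
    have hC := natSuccr (b+j+1) (b+1)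
    rw [show (b+1)+1 = b+2 by omega] at hC
    push_cast at hC
    have realeq : ((b:ℝ)+2) * (gbinom ((b:ℝ)+2+1/r) (m+1) * (Nat.choose ((b+j+1)+1) (b+2) : ℝ))
        = (2*(b:ℝ)+4) * (gbinom ((b:ℝ)+1+1/r) (m+1) * (Nat.choose (b+j+1) (b+1) : ℝ))
          + ((b:ℝ)+2-1/r) * (gbinom ((b:ℝ)+1+1/r) m * (Nat.choose (b+j+1) (b+1) : ℝ)) := by
      have key : (((b:ℝ)+2) * (gbinom ((b:ℝ)+2+1/r) (m+1) * (Nat.choose ((b+j+1)+1) (b+2) : ℝ))) * ((b:ℝ)+1+1/r-m)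
          = ((2*(b:ℝ)+4) * (gbinom ((b:ℝ)+1+1/r) (m+1) * (Nat.choose (b+j+1) (b+1) : ℝ))
          + ((b:ℝ)+2-1/r) * (gbinom ((b:ℝ)+1+1/r) m * (Nat.choose (b+j+1) (b+1) : ℝ))) * ((b:ℝ)+1+1/r-m) := by
        linear_combination ((b:ℝ)+2) * (Nat.choose ((b+j+1)+1) (b+2) : ℝ) * hA
          + ((b:ℝ)+2+1/r) * gbinom ((b:ℝ)+1+1/r) (m+1) * hC
          + ((b:ℝ)+2-1/r) * (Nat.choose (b+j+1) (b+1) : ℝ) * hB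
          + ((b:ℝ)+2+1/r) * gbinom ((b:ℝ)+1+1/r) (m+1) * (Nat.choose (b+j+1) (b+1) : ℝ) * hjr
      exact mul_right_cancel₀ hd key
    exact_mod_cast realeq
  have S := sum_step (b+2) z
    (fun m => ((((b:ℝ)+2) * (gbinom ((b:ℝ)+2+1/r) m * Nat.choose (2*b+4-m) (b+2)) : ℝ) : ℂ))
    (fun m => (((2*(b:ℝ)+4) * (gbinom ((b:ℝ)+1+1/r) m * Nat.choose (2*b+3-m) (b+1)) : ℝ) : ℂ))
    (fun m => ((((b:ℝ)+2-1/r) * (gbinom ((b:ℝ)+1+1/r) m * Nat.choose (2*b+2-m) (b+1)) : ℝ) : ℂ))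
    h0c hmc
  rw [expA20 r b z, expA21 r b z, expA10 r b z]
  calc ((b:ℂ)+2) * ∑ m ∈ Finset.range (b+3),
        (((gbinom ((b:ℝ)+2+1/r) m * Nat.choose (2*b+4-m) (b+2) : ℝ)) : ℂ) * (-z)^m
      = ∑ m ∈ Finset.range (b+3),
        ((((b:ℝ)+2) * (gbinom ((b:ℝ)+2+1/r) m * Nat.choose (2*b+4-m) (b+2)) : ℝ) : ℂ) * (-z)^m := by
        rw [Finset.mul_sum]
        exact Finset.sum_congr rfl (fun m _ => by push_cast; ring)
    _ = _ := S
    _ = (2*(b:ℂ)+4) * ∑ m ∈ Finset.range (b+3),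
          (((gbinom ((b:ℝ)+1+1/r) m * Nat.choose (2*b+3-m) (b+1) : ℝ)) : ℂ) * (-z)^m
        + (((b:ℝ)+2-1/r : ℝ) : ℂ) * ((-z) * ∑ m ∈ Finset.range (b+2),
          (((gbinom ((b:ℝ)+1+1/r) m * Nat.choose (2*b+2-m) (b+1) : ℝ)) : ℂ) * (-z)^m) := by
        rw [Finset.mul_sum, Finset.mul_sum, Finset.mul_sum, Finset.mul_sum]
        congr 1
        · exact Finset.sum_congr rfl (fun m _ => by push_cast; ring)
        · exact Finset.sum_congr rfl (fun m _ => by push_cast; ring)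

lemma recB2 (r : ℝ) (b : ℕ) (z : ℂ) :
    ((b:ℂ)+2) * padeB r (b+2) 0 z
      = (2*(b:ℂ)+4) * padeB r (b+2) 1 z
        + (((b:ℝ)+2-1/r : ℝ) : ℂ) * ((-z) * padeB r (b+1) 0 z) := by
  have h0c : ((((b:ℝ)+2) * (gbinom ((b:ℝ)+2-1/r) 0 * Nat.choose (2*b+4-0) (b+2)) : ℝ) : ℂ)
      = (((2*(b:ℝ)+4) * (gbinom ((b:ℝ)+2-1/r) 0 * Nat.choose (2*b+3-0) (b+2)) : ℝ) : ℂ) := by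
    have h := natC0''' (b+1)
    rw [show 2*(b+1)+2 = 2*b+4 by omega, show 2*(b+1)+1 = 2*b+3 by omega,
        show (b+1)+1 = b+2 by omega] at h
    have hr := congrArg (Nat.cast : ℕ → ℝ) h
    push_cast at hr
    simp only [Nat.sub_zero, gbinom_zero, one_mul]
    exact_mod_cast hr
  have hmc : ∀ m, m < b+2 →
      ((((b:ℝ)+2) * (gbinom ((b:ℝ)+2-1/r) (m+1) * Nat.choose (2*b+4-(m+1)) (b+2)) : ℝ) : ℂ)
      = (((2*(b:ℝ)+4) * (gbinom ((b:ℝ)+2-1/r) (m+1) * Nat.choose (2*b+3-(m+1)) (b+2)) : ℝ) : ℂ)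
        + ((((b:ℝ)+2-1/r) * (gbinom ((b:ℝ)+1-1/r) m * Nat.choose (2*b+2-m) (b+1)) : ℝ) : ℂ) := by
    intro m hm
    obtain ⟨j, hj⟩ : ∃ j, m + j = b + 1 := ⟨b+1-m, by omega⟩
    rw [show 2*b+4-(m+1) = (b+j+1)+1 by omega, show 2*b+3-(m+1) = b+j+1 by omega,
        show 2*b+2-m = b+j+1 by omega]
    have hg : ((b:ℝ)+2-1/r) * gbinom ((b:ℝ)+1-1/r) m = ((m:ℝ)+1) * gbinom ((b:ℝ)+2-1/r) (m+1) := by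
      have h := gb_rel1 ((b:ℝ)+2-1/r) m
      rw [show (b:ℝ)+2-1/r-1 = (b:ℝ)+1-1/r by ring] at h
      exact h
    have hB2 := natB2r (b+1) m (b+j+1) j hj (by omega)
    rw [show (b+1)+1 = b+2 by omega] at hB2
    push_cast at hB2
    have realeq : ((b:ℝ)+2) * (gbinom ((b:ℝ)+2-1/r) (m+1) * (Nat.choose ((b+j+1)+1) (b+2) : ℝ))
        = (2*(b:ℝ)+4) * (gbinom ((b:ℝ)+2-1/r) (m+1) * (Nat.choose (b+j+1) (b+2) : ℝ))
          + ((b:ℝ)+2-1/r) * (gbinom ((b:ℝ)+1-1/r) m * (Nat.choose (b+j+1) (b+1) : ℝ)) := by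
      linear_combination gbinom ((b:ℝ)+2-1/r) (m+1) * hB2
        - (Nat.choose (b+j+1) (b+1) : ℝ) * hg
    exact_mod_cast realeq
  have S := sum_step (b+2) z
    (fun m => ((((b:ℝ)+2) * (gbinom ((b:ℝ)+2-1/r) m * Nat.choose (2*b+4-m) (b+2)) : ℝ) : ℂ))
    (fun m => (((2*(b:ℝ)+4) * (gbinom ((b:ℝ)+2-1/r) m * Nat.choose (2*b+3-m) (b+2)) : ℝ) : ℂ))
    (fun m => ((((b:ℝ)+2-1/r) * (gbinom ((b:ℝ)+1-1/r) m * Nat.choose (2*b+2-m) (b+1)) : ℝ) : ℂ))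
    h0c hmc
  rw [expB20 r b z, expB21' r b z, expB10 r b z]
  calc ((b:ℂ)+2) * ∑ m ∈ Finset.range (b+3),
        (((gbinom ((b:ℝ)+2-1/r) m * Nat.choose (2*b+4-m) (b+2) : ℝ)) : ℂ) * (-z)^m
      = ∑ m ∈ Finset.range (b+3),
        ((((b:ℝ)+2) * (gbinom ((b:ℝ)+2-1/r) m * Nat.choose (2*b+4-m) (b+2)) : ℝ) : ℂ) * (-z)^m := by
        rw [Finset.mul_sum]
        exact Finset.sum_congr rfl (fun m _ => by push_cast; ring)
    _ = _ := S
    _ = (2*(b:ℂ)+4) * ∑ m ∈ Finset.range (b+3),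
          (((gbinom ((b:ℝ)+2-1/r) m * Nat.choose (2*b+3-m) (b+2) : ℝ)) : ℂ) * (-z)^m
        + (((b:ℝ)+2-1/r : ℝ) : ℂ) * ((-z) * ∑ m ∈ Finset.range (b+2),
          (((gbinom ((b:ℝ)+1-1/r) m * Nat.choose (2*b+2-m) (b+1) : ℝ)) : ℂ) * (-z)^m) := by
        rw [Finset.mul_sum, Finset.mul_sum, Finset.mul_sum, Finset.mul_sum]
        congr 1
        · exact Finset.sum_congr rfl (fun m _ => by push_cast; ring)
        · exact Finset.sum_congr rfl (fun m _ => by push_cast; ring)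

lemma detD1 (r : ℝ) (hx0 : 0 < 1/r) (hx1 : 1/r < 1) (b : ℕ) (z : ℂ) :
    ((b:ℂ)+2) * (padeA r (b+1) 0 z * padeB r (b+2) 1 z - padeA r (b+2) 1 z * padeB r (b+1) 0 z)
      = (((b:ℝ)+1+1/r : ℝ) : ℂ) * (-z)
        * (padeA r (b+1) 0 z * padeB r (b+1) 1 z - padeA r (b+1) 1 z * padeB r (b+1) 0 z) := by
  have rA := recA1 r b z
  have rB := recB1 r hx0 hx1 b z
  linear_combination (padeA r (b+1) 0 z) * rB - (padeB r (b+1) 0 z) * rA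

lemma detD0succ (r : ℝ) (hx0 : 0 < 1/r) (b : ℕ) (z : ℂ) :
    ((b:ℂ)+2) * (padeA r (b+2) 0 z * padeB r (b+2) 1 z - padeA r (b+2) 1 z * padeB r (b+2) 0 z)
      = (((b:ℝ)+2-1/r : ℝ) : ℂ) * (-z)
        * (padeA r (b+1) 0 z * padeB r (b+2) 1 z - padeA r (b+2) 1 z * padeB r (b+1) 0 z) := by
  have rA := recA2 r hx0 b z
  have rB := recB2 r b z
  linear_combination (padeB r (b+2) 1 z) * rA - (padeA r (b+2) 1 z) * rB

lemma base0 (r : ℝ) (z : ℂ) :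
    padeA r 1 0 z * padeB r 1 1 z - padeA r 1 1 z * padeB r 1 0 z
      = ((-(1/r) * (1 - 1/r) : ℝ) : ℂ) * z^2 := by
  simp [padeA, padeB, gbinom, Finset.sum_range_succ, Finset.prod_range_succ]
  push_cast
  ring

lemma D0_eq (r : ℝ) (hx0 : 0 < 1/r) (hx1 : 1/r < 1) :
    ∀ b : ℕ, ∀ z : ℂ,
    padeA r (b+1) 0 z * padeB r (b+1) 1 z - padeA r (b+1) 1 z * padeB r (b+1) 0 z
      = ((-(1/r) * gbinom ((b:ℝ)+1-1/r) (b+1) * gbinom ((b:ℝ)+1/r) b / ((b:ℝ)+1) : ℝ) : ℂ)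
          * z^(2*b+2) := by
  intro b
  induction b with
  | zero =>
    intro z
    have hb := base0 r z
    have hc : (-(1/r) * gbinom (((0:ℕ):ℝ)+1-1/r) (0+1) * gbinom (((0:ℕ):ℝ)+1/r) 0 / (((0:ℕ):ℝ)+1) : ℝ)
        = -(1/r) * (1 - 1/r) := by
      simp [gbinom]
    rw [hc]
    simpa using hb
  | succ b ih =>
    intro z
    have hb2c : ((b:ℂ)+2) ≠ 0 := by
      have : ((b:ℝ)+2) ≠ 0 := by positivity
      exact_mod_cast this
    have e1 := detD1 r hx0 hx1 b z
    have e2 := detD0succ r hx0 b z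
    rw [ih z] at e1
    -- constants
    have rat1 : ((b:ℝ)+2) * gbinom ((b:ℝ)+2-1/r) (b+2) = ((b:ℝ)+2-1/r) * gbinom ((b:ℝ)+1-1/r) (b+1) := by
      have h := gb_rel1 ((b:ℝ)+2-1/r) (b+1)
      rw [show (b:ℝ)+2-1/r-1 = (b:ℝ)+1-1/r by ring] at h
      push_cast at h
      linarith
    have rat2 : ((b:ℝ)+1) * gbinom ((b:ℝ)+1+1/r) (b+1) = ((b:ℝ)+1+1/r) * gbinom ((b:ℝ)+1/r) b := by
      have h := gb_rel1 ((b:ℝ)+1+1/r) b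
      rw [show (b:ℝ)+1+1/r-1 = (b:ℝ)+1/r by ring] at h
      push_cast at h
      linarith
    have hb1 : ((b:ℝ)+1) ≠ 0 := by positivity
    have hb2 : ((b:ℝ)+2) ≠ 0 := by positivity
    have hconst : (-(1/r) * gbinom (((b+1:ℕ):ℝ)+1-1/r) (b+1+1) * gbinom (((b+1:ℕ):ℝ)+1/r) (b+1) / (((b+1:ℕ):ℝ)+1) : ℝ)
          * ((b:ℝ)+2)^2
        = ((b:ℝ)+2-1/r) * ((b:ℝ)+1+1/r)
          * (-(1/r) * gbinom ((b:ℝ)+1-1/r) (b+1) * gbinom ((b:ℝ)+1/r) b / ((b:ℝ)+1)) := by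
      have hr0 : r ≠ 0 := by
        intro h
        rw [h] at hx0
        simp at hx0
      push_cast
      rw [show b+1+1 = b+2 by omega, show (b:ℝ)+1+1-1/r = (b:ℝ)+2-1/r by ring,
          show (b:ℝ)+1+1 = (b:ℝ)+2 by ring]
      set G1 := gbinom ((b:ℝ)+1-1/r) (b+1) with hG1
      set G2 := gbinom ((b:ℝ)+1/r) b with hG2
      set u := gbinom ((b:ℝ)+2-1/r) (b+2) with hU
      set v := gbinom ((b:ℝ)+1+1/r) (b+1) with hV
      have hu2 : u = ((b:ℝ)+2-1/r) * G1 / ((b:ℝ)+2) := by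
        rw [eq_div_iff hb2]
        linear_combination rat1
      have hv2 : v = ((b:ℝ)+1+1/r) * G2 / ((b:ℝ)+1) := by
        rw [eq_div_iff hb1]
        linear_combination rat2
      rw [hu2, hv2]
      field_simp
    -- combine
    have e4 : ((b:ℂ)+2)^2
        * (padeA r (b+2) 0 z * padeB r (b+2) 1 z - padeA r (b+2) 1 z * padeB r (b+2) 0 z)
        = (((b:ℝ)+2-1/r : ℝ) : ℂ) * (((b:ℝ)+1+1/r : ℝ) : ℂ)
          * ((-(1/r) * gbinom ((b:ℝ)+1-1/r) (b+1) * gbinom ((b:ℝ)+1/r) b / ((b:ℝ)+1) : ℝ) : ℂ)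
          * z^(2*b+4) := by
      have := congrArg (fun w => ((b:ℂ)+2) * w) e2
      linear_combination this + (((b:ℝ)+2-1/r : ℝ) : ℂ) * (-z) * e1
    -- finish
    have hcastconst := congrArg (Complex.ofReal) hconst
    push_cast at hcastconst
    have h2sq : ((b:ℂ)+2)^2 ≠ 0 := pow_ne_zero _ hb2c
    apply mul_left_cancel₀ h2sq
    rw [e4]
    rw [show 2*(b+1)+2 = 2*b+4 by omega]
    have : (((-(1/r) * gbinom (((b+1:ℕ):ℝ)+1-1/r) (b+1+1) * gbinom (((b+1:ℕ):ℝ)+1/r) (b+1) / (((b+1:ℕ):ℝ)+1)) : ℝ) : ℂ) * ((b:ℂ)+2)^2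
        = (((b:ℝ)+2-1/r : ℝ) : ℂ) * (((b:ℝ)+1+1/r : ℝ) : ℂ)
          * (((-(1/r) * gbinom ((b:ℝ)+1-1/r) (b+1) * gbinom ((b:ℝ)+1/r) b / ((b:ℝ)+1)) : ℝ) : ℂ) := by
      exact_mod_cast hcastconst
    linear_combination (-(z^(2*b+4))) * this

lemma D1_eq (r : ℝ) (hx0 : 0 < 1/r) (hx1 : 1/r < 1) (b : ℕ) (z : ℂ) :
    padeA r (b+1) 0 z * padeB r (b+2) 1 z - padeA r (b+2) 1 z * padeB r (b+1) 0 z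
      = (((1/r) * ((b:ℝ)+1+1/r) * gbinom ((b:ℝ)+1-1/r) (b+1) * gbinom ((b:ℝ)+1/r) b
          / (((b:ℝ)+1) * ((b:ℝ)+2)) : ℝ) : ℂ) * z^(2*b+3) := by
  have hr0 : r ≠ 0 := by
    intro h
    rw [h] at hx0
    simp at hx0
  have hb2c : ((b:ℂ)+2) ≠ 0 := by
    have : ((b:ℝ)+2) ≠ 0 := by positivity
    exact_mod_cast this
  have hb1 : ((b:ℝ)+1) ≠ 0 := by positivity
  have hb2 : ((b:ℝ)+2) ≠ 0 := by positivity
  have e1 := detD1 r hx0 hx1 b z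
  rw [D0_eq r hx0 hx1 b z] at e1
  apply mul_left_cancel₀ hb2c
  rw [e1]
  have hrel : ((b:ℝ)+2) * ((1/r) * ((b:ℝ)+1+1/r) * gbinom ((b:ℝ)+1-1/r) (b+1) * gbinom ((b:ℝ)+1/r) b
          / (((b:ℝ)+1)*((b:ℝ)+2)))
      = -(((b:ℝ)+1+1/r) * (-(1/r) * gbinom ((b:ℝ)+1-1/r) (b+1) * gbinom ((b:ℝ)+1/r) b / ((b:ℝ)+1))) := by
    set G1 := gbinom ((b:ℝ)+1-1/r) (b+1)
    set G2 := gbinom ((b:ℝ)+1/r) b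
    field_simp
  have hrelc := congrArg (Complex.ofReal) hrel
  push_cast at hrelc
  push_cast
  linear_combination (-(z^(2*b+3))) * hrelc

lemma const0 (r : ℝ) (b : ℕ) (hr0 : r ≠ 0) (hb1 : ((b:ℝ)+1) ≠ 0)
    (rat2 : ((b:ℝ)+1) * gbinom ((b:ℝ)+1+1/r) (b+1) = ((b:ℝ)+1+1/r) * gbinom ((b:ℝ)+1/r) b) :
    gbinom ((b:ℝ)+1-1/r) (b+1) * gbinom ((b:ℝ)+1/r) b
      - gbinom ((b:ℝ)+1-1/r) (b+1) * gbinom ((b:ℝ)+1+1/r) (b+1)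
    = -(1/r) * gbinom ((b:ℝ)+1-1/r) (b+1) * gbinom ((b:ℝ)+1/r) b / ((b:ℝ)+1) := by
  have hv : gbinom ((b:ℝ)+1+1/r) (b+1) = ((b:ℝ)+1+1/r) * gbinom ((b:ℝ)+1/r) b / ((b:ℝ)+1) := by
    rw [eq_div_iff hb1]
    linear_combination rat2
  rw [hv]
  set G1 := gbinom ((b:ℝ)+1-1/r) (b+1)
  set G2 := gbinom ((b:ℝ)+1/r) b
  field_simp
  ring

lemma const1 (r : ℝ) (b : ℕ) (hr0 : r ≠ 0) (hb1 : ((b:ℝ)+1) ≠ 0) (hb2 : ((b:ℝ)+2) ≠ 0)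
    (rat1 : ((b:ℝ)+2) * gbinom ((b:ℝ)+2-1/r) (b+2) = ((b:ℝ)+2-1/r) * gbinom ((b:ℝ)+1-1/r) (b+1))
    (rat2 : ((b:ℝ)+1) * gbinom ((b:ℝ)+1+1/r) (b+1) = ((b:ℝ)+1+1/r) * gbinom ((b:ℝ)+1/r) b) :
    gbinom ((b:ℝ)+1-1/r) (b+1) * gbinom ((b:ℝ)+1+1/r) (b+1)
      - gbinom ((b:ℝ)+2-1/r) (b+2) * gbinom ((b:ℝ)+1+1/r) (b+1)
    = (1/r) * ((b:ℝ)+1+1/r) * gbinom ((b:ℝ)+1-1/r) (b+1) * gbinom ((b:ℝ)+1/r) b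
        / (((b:ℝ)+1) * ((b:ℝ)+2)) := by
  have hv : gbinom ((b:ℝ)+1+1/r) (b+1) = ((b:ℝ)+1+1/r) * gbinom ((b:ℝ)+1/r) b / ((b:ℝ)+1) := by
    rw [eq_div_iff hb1]
    linear_combination rat2
  have hu : gbinom ((b:ℝ)+2-1/r) (b+2) = ((b:ℝ)+2-1/r) * gbinom ((b:ℝ)+1-1/r) (b+1) / ((b:ℝ)+2) := by
    rw [eq_div_iff hb2]
    linear_combination rat1
  rw [hv, hu]
  set G1 := gbinom ((b:ℝ)+1-1/r) (b+1)
  set G2 := gbinom ((b:ℝ)+1/r) b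
  field_simp
  ring

lemma G1pos (r : ℝ) (hx1 : 1/r < 1) (b : ℕ) : 0 < gbinom ((b:ℝ)+1-1/r) (b+1) := by
  apply gbinom_pos
  intro i hi
  have : (i:ℝ) ≤ b := by exact_mod_cast Nat.lt_succ_iff.mp hi
  linarith

lemma G2pos (r : ℝ) (hx0 : 0 < 1/r) (b : ℕ) : 0 < gbinom ((b:ℝ)+1/r) b := by
  apply gbinom_pos
  intro i hi
  have : (i:ℝ)+1 ≤ b := by exact_mod_cast hi
  linarith

theorem stmt_13 (r n : ℕ) (hr : 2 ≤ r) (hn : 1 ≤ n) (I : ℕ) (hI : I ≤ 1) :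
    (gbinom ((n : ℝ) - 1 / r) n * gbinom ((n : ℝ) + I + 1 / r - 1) (n + I - 1) -
        gbinom ((n : ℝ) + I - 1 / r) (n + I) * gbinom ((n : ℝ) + 1 / r) n ≠ 0) ∧
    (∀ z : ℂ,
      padeA r n 0 z * padeB r (n + I) 1 z - padeA r (n + I) 1 z * padeB r n 0 z =
        ((gbinom ((n : ℝ) - 1 / r) n * gbinom ((n : ℝ) + I + 1 / r - 1) (n + I - 1) -
            gbinom ((n : ℝ) + I - 1 / r) (n + I) * gbinom ((n : ℝ) + 1 / r) n : ℝ) : ℂ) *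
          z ^ (2 * n + I)) ∧
    (∀ z : ℂ, z ≠ 0 →
      padeA r n 0 z * padeB r (n + I) 1 z ≠ padeA r (n + I) 1 z * padeB r n 0 z) := by
  obtain ⟨b, rfl⟩ : ∃ b, n = b + 1 := ⟨n - 1, by omega⟩
  have hr2 : (2:ℝ) ≤ ((r:ℕ):ℝ) := by exact_mod_cast hr
  have hrpos : (0:ℝ) < ((r:ℕ):ℝ) := by linarith
  have hr0 : ((r:ℕ):ℝ) ≠ 0 := ne_of_gt hrpos
  have hx0 : 0 < 1/((r:ℕ):ℝ) := by positivity
  have hx1 : 1/((r:ℕ):ℝ) < 1 := by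
    rw [div_lt_one hrpos]
    linarith
  have hb1 : ((b:ℝ)+1) ≠ 0 := by positivity
  have hb2 : ((b:ℝ)+2) ≠ 0 := by positivity
  have rat1 : ((b:ℝ)+2) * gbinom ((b:ℝ)+2-1/((r:ℕ):ℝ)) (b+2)
      = ((b:ℝ)+2-1/((r:ℕ):ℝ)) * gbinom ((b:ℝ)+1-1/((r:ℕ):ℝ)) (b+1) := by
    have h := gb_rel1 ((b:ℝ)+2-1/((r:ℕ):ℝ)) (b+1)
    rw [show (b:ℝ)+2-1/((r:ℕ):ℝ)-1 = (b:ℝ)+1-1/((r:ℕ):ℝ) by ring] at h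
    push_cast at h
    linarith
  have rat2 : ((b:ℝ)+1) * gbinom ((b:ℝ)+1+1/((r:ℕ):ℝ)) (b+1)
      = ((b:ℝ)+1+1/((r:ℕ):ℝ)) * gbinom ((b:ℝ)+1/((r:ℕ):ℝ)) b := by
    have h := gb_rel1 ((b:ℝ)+1+1/((r:ℕ):ℝ)) b
    rw [show (b:ℝ)+1+1/((r:ℕ):ℝ)-1 = (b:ℝ)+1/((r:ℕ):ℝ) by ring] at h
    push_cast at h
    linarith
  have hg1 := G1pos ((r:ℕ):ℝ) hx1 b
  have hg2 := G2pos ((r:ℕ):ℝ) hx0 b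
  interval_cases I
  · -- I = 0
    have hneg : -(1/((r:ℕ):ℝ)) * gbinom ((b:ℝ)+1-1/((r:ℕ):ℝ)) (b+1) * gbinom ((b:ℝ)+1/((r:ℕ):ℝ)) b
        / ((b:ℝ)+1) < 0 := by
      apply div_neg_of_neg_of_pos
      · nlinarith [mul_pos (mul_pos hx0 hg1) hg2]
      · positivity
    have hE : gbinom ((((b+1:ℕ)):ℝ) - 1/((r:ℕ):ℝ)) (b+1)
          * gbinom ((((b+1:ℕ)):ℝ) + ((0:ℕ):ℝ) + 1/((r:ℕ):ℝ) - 1) (b+1+0-1)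
        - gbinom ((((b+1:ℕ)):ℝ) + ((0:ℕ):ℝ) - 1/((r:ℕ):ℝ)) (b+1+0)
          * gbinom ((((b+1:ℕ)):ℝ) + 1/((r:ℕ):ℝ)) (b+1)
        = -(1/((r:ℕ):ℝ)) * gbinom ((b:ℝ)+1-1/((r:ℕ):ℝ)) (b+1) * gbinom ((b:ℝ)+1/((r:ℕ):ℝ)) b
            / ((b:ℝ)+1) := by
      rw [show (((b+1:ℕ)):ℝ) - 1/((r:ℕ):ℝ) = (b:ℝ)+1-1/((r:ℕ):ℝ) by push_cast; ring,
          show (((b+1:ℕ)):ℝ) + ((0:ℕ):ℝ) + 1/((r:ℕ):ℝ) - 1 = (b:ℝ)+1/((r:ℕ):ℝ) by push_cast; ring,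
          show (((b+1:ℕ)):ℝ) + ((0:ℕ):ℝ) - 1/((r:ℕ):ℝ) = (b:ℝ)+1-1/((r:ℕ):ℝ) by push_cast; ring,
          show (((b+1:ℕ)):ℝ) + 1/((r:ℕ):ℝ) = (b:ℝ)+1+1/((r:ℕ):ℝ) by push_cast; ring,
          show b+1+0-1 = b by omega, show b+1+0 = b+1 by omega]
      exact const0 _ b hr0 hb1 rat2
    refine ⟨?_, ?_, ?_⟩
    · rw [hE]
      exact ne_of_lt hneg
    · intro z
      simp only [Nat.add_zero]
      rw [D0_eq ((r:ℕ):ℝ) hx0 hx1 b z, show 2*(b+1) = 2*b+2 by omega]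
      congr 1
      exact congrArg Complex.ofReal hE.symm
    · intro z hz heq
      simp only [Nat.add_zero] at heq
      have hid := D0_eq ((r:ℕ):ℝ) hx0 hx1 b z
      rw [heq, sub_self] at hid
      have hne : ((-(1/((r:ℕ):ℝ)) * gbinom ((b:ℝ)+1-1/((r:ℕ):ℝ)) (b+1)
          * gbinom ((b:ℝ)+1/((r:ℕ):ℝ)) b / ((b:ℝ)+1) : ℝ) : ℂ) * z^(2*b+2) ≠ 0 :=
        mul_ne_zero (Complex.ofReal_ne_zero.mpr (ne_of_lt hneg)) (pow_ne_zero _ hz)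
      exact hne hid.symm
  · -- I = 1
    have hpos : 0 < (1/((r:ℕ):ℝ)) * ((b:ℝ)+1+1/((r:ℕ):ℝ)) * gbinom ((b:ℝ)+1-1/((r:ℕ):ℝ)) (b+1)
        * gbinom ((b:ℝ)+1/((r:ℕ):ℝ)) b / (((b:ℝ)+1) * ((b:ℝ)+2)) := by
      apply div_pos
      · have hbx : (0:ℝ) < (b:ℝ)+1+1/((r:ℕ):ℝ) := by positivity
        nlinarith [mul_pos (mul_pos (mul_pos hx0 hbx) hg1) hg2]
      · positivity
    have hE : gbinom ((((b+1:ℕ)):ℝ) - 1/((r:ℕ):ℝ)) (b+1)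
          * gbinom ((((b+1:ℕ)):ℝ) + ((1:ℕ):ℝ) + 1/((r:ℕ):ℝ) - 1) (b+1+1-1)
        - gbinom ((((b+1:ℕ)):ℝ) + ((1:ℕ):ℝ) - 1/((r:ℕ):ℝ)) (b+1+1)
          * gbinom ((((b+1:ℕ)):ℝ) + 1/((r:ℕ):ℝ)) (b+1)
        = (1/((r:ℕ):ℝ)) * ((b:ℝ)+1+1/((r:ℕ):ℝ)) * gbinom ((b:ℝ)+1-1/((r:ℕ):ℝ)) (b+1)
            * gbinom ((b:ℝ)+1/((r:ℕ):ℝ)) b / (((b:ℝ)+1) * ((b:ℝ)+2)) := by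
      rw [show (((b+1:ℕ)):ℝ) - 1/((r:ℕ):ℝ) = (b:ℝ)+1-1/((r:ℕ):ℝ) by push_cast; ring,
          show (((b+1:ℕ)):ℝ) + ((1:ℕ):ℝ) + 1/((r:ℕ):ℝ) - 1 = (b:ℝ)+1+1/((r:ℕ):ℝ) by push_cast; ring,
          show (((b+1:ℕ)):ℝ) + ((1:ℕ):ℝ) - 1/((r:ℕ):ℝ) = (b:ℝ)+2-1/((r:ℕ):ℝ) by push_cast; ring,
          show (((b+1:ℕ)):ℝ) + 1/((r:ℕ):ℝ) = (b:ℝ)+1+1/((r:ℕ):ℝ) by push_cast; ring,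
          show b+1+1-1 = b+1 by omega, show b+1+1 = b+2 by omega]
      exact const1 _ b hr0 hb1 hb2 rat1 rat2
    refine ⟨?_, ?_, ?_⟩
    · rw [hE]
      exact ne_of_gt hpos
    · intro z
      rw [show b+1+1 = b+2 by omega, D1_eq ((r:ℕ):ℝ) hx0 hx1 b z,
          show 2*(b+1)+1 = 2*b+3 by omega]
      congr 1
      exact congrArg Complex.ofReal hE.symm
    · intro z hz heq
      rw [show b+1+1 = b+2 by omega] at heq
      have hid := D1_eq ((r:ℕ):ℝ) hx0 hx1 b z
      rw [heq, sub_self] at hid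
      have hne : (((1/((r:ℕ):ℝ)) * ((b:ℝ)+1+1/((r:ℕ):ℝ)) * gbinom ((b:ℝ)+1-1/((r:ℕ):ℝ)) (b+1)
          * gbinom ((b:ℝ)+1/((r:ℕ):ℝ)) b / (((b:ℝ)+1) * ((b:ℝ)+2)) : ℝ) : ℂ) * z^(2*b+3) ≠ 0 :=
        mul_ne_zero (Complex.ofReal_ne_zero.mpr (ne_of_gt hpos)) (pow_ne_zero _ hz)
      exact hne hid.symm
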